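/- Set n_k = k^{2k}, v_k = n_{k+1} − n_k, v'_k = v_k (1 − a_{n_{k+1}}), and u_k = (4 log₂(v_k) / (n_{k+1} a_{n_{k+1}}))^{1/2}. Assume (a_n) are positive reals with n a_n nondecreasing to ∞, a_n nonincreasing to 0, a_n log₂ n → 0, and n a_n/(log₂ n)^{7/3} → ∞. Let Y_k have Poisson distribution with mean v'_k. Then (2π v_k)^{1/2} · P( Y_k = ⌊v'_k − v_k a_{n_{k+1}} u_k⌋ ) → 1 as k → ∞. -/

import Mathlib

open MeasureTheory ProbabilityTheory Filter

/-- `llog u = log (log (u ⊔ e))`. -/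
noncomputable def llog (x : ℝ) : ℝ := Real.log (Real.log (max x (Real.exp 1)))

/-- Sup-norm over `[0,1]`. -/
noncomputable def supNorm (f : ℝ → ℝ) : ℝ := ⨆ t : Set.Icc (0:ℝ) 1, |f t|

/-- Membership in the Strassen set `S₁`. -/
def InStrassen1 (f : ℝ → ℝ) : Prop :=
  ∃ f' : ℝ → ℝ, Measurable f' ∧
    (∀ x ∈ Set.Icc (0:ℝ) 1, f x = ∫ t in (0:ℝ)..x, f' t) ∧
    (∫ t in (0:ℝ)..1, (f' t) ^ 2) ≤ 1

/-- Membership in `S₂ = {f ∈ S₁ : f 1 = 0}`. -/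
def InStrassen2 (f : ℝ → ℝ) : Prop := InStrassen1 f ∧ f 1 = 0

variable {Ω : Type*} [MeasurableSpace Ω]

/-- Empirical distribution function `F_n`. -/
noncomputable def empF (U : ℕ → Ω → ℝ) (n : ℕ) (t : ℝ) (ω : Ω) : ℝ :=
  (Set.ncard {i : ℕ | i < n ∧ U i ω ≤ t} : ℝ) / n

/-- Uniform empirical process `α_n(t) = √n (F_n(t) - t)`. -/
noncomputable def empProc (U : ℕ → Ω → ℝ) (n : ℕ) (t : ℝ) (ω : Ω) : ℝ :=
  Real.sqrt n * (empF U n t ω - t)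

/-- `H_n(t) = n (F_n(t) - t)`. -/
noncomputable def empH (U : ℕ → Ω → ℝ) (n : ℕ) (t : ℝ) (ω : Ω) : ℝ :=
  (n : ℝ) * (empF U n t ω - t)

/-- The generalized inverse `F_n⁻¹(t) = inf {u : F_n(u) ≥ t}`. -/
noncomputable def empQF (U : ℕ → Ω → ℝ) (n : ℕ) (t : ℝ) (ω : Ω) : ℝ :=
  sInf {u : ℝ | t ≤ empF U n u ω}

/-- Uniform quantile process `β_n(t) = √n (F_n⁻¹(t) - t)`. -/
noncomputable def quantProc (U : ℕ → Ω → ℝ) (n : ℕ) (t : ℝ) (ω : Ω) : ℝ :=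
  Real.sqrt n * (empQF U n t ω - t)

/-- `(U_i)` are i.i.d. uniform on `[0,1]`. -/
def IsUniformIID (μ : Measure Ω) (U : ℕ → Ω → ℝ) : Prop :=
  (∀ i, Measurable (U i)) ∧
  iIndepFun U μ ∧
  (∀ i, Measure.map (U i) μ = MeasureTheory.volume.restrict (Set.Icc (0:ℝ) 1))

/-- `n_k = k^{2k}`. -/
def nk (k : ℕ) : ℕ := k ^ (2 * k)

/-- `v_k = n_{k+1} - n_k`. -/
def vk (k : ℕ) : ℕ := nk (k + 1) - nk k

/-- The Poisson probability `P(X = l)` for a Poisson random variable with mean `m`. -/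
noncomputable def poissonProb (m : ℝ) (l : ℕ) : ℝ :=
  Real.exp (-m) * m ^ l / (Nat.factorial l)

/-- `u_k = (4 log₂ v_k / (n_{k+1} a_{n_{k+1}}))^{1/2}`. -/
noncomputable def uk (a : ℕ → ℝ) (k : ℕ) : ℝ :=
  Real.sqrt (4 * llog (vk k) / ((nk (k + 1) : ℝ) * a (nk (k + 1))))


/-!
By Stirling's formula, for `Y` Poisson with mean `m`,
`√(2πV) · P(Y = l) = √(V/l) · (√π / stirlingSeq l) · exp (l - m + l log (m/l))`,
and `log x ≤ x - 1` pins the exponent between `-(m - l)²/m` and `0`. Hence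
`√(2πV) · P(Y = l) → 1` as soon as `m ~ V` and `l` stays within `o(√V)` of `m`.
Here `m = v'_k ~ v_k` and `m - l = v_k a u_k + O(1)`, where
`(v_k a u_k)² / v_k = 4 a llog v_k · v_k / n_{k+1} ≤ 4 a_{n_{k+1}} llog n_{k+1} → 0`
with `a = a_{n_{k+1}}`.
-/

open Real in
theorem sqrt_two_pi_mul_poissonProb_eq {V m : ℝ} {l : ℕ} (hV : 0 ≤ V) (hm : 0 < m)
    (hl : l ≠ 0) :
    √(2 * π * V) * poissonProb m l
      = √(V / l) * (√π / Stirling.stirlingSeq l) * exp (l - m + l * log (m / l)) := by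
  have hs : 0 < Stirling.stirlingSeq l := (sqrt_pos.2 pi_pos).trans_le
    (Stirling.sqrt_pi_le_stirlingSeq hl)
  have hfac : (l.factorial : ℝ) = Stirling.stirlingSeq l * (√(2 * l) * (l ^ l / exp l)) := by
    rw [Stirling.stirlingSeq, div_pow, ← exp_nat_mul, mul_one]
    field_simp
  have hexp : exp (l - m + l * log (m / l)) = exp (-m) * exp l * (m / l) ^ l := by
    rw [show (l : ℝ) - m + l * log (m / l) = -m + l + l * log (m / l) by ring,
      exp_add, exp_add, exp_nat_mul, exp_log (by positivity)]
  have hsqrt : √(2 * π * V) = √π * √(V / l) * √(2 * l) := by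
    rw [← sqrt_mul pi_pos.le, ← sqrt_mul (by positivity)]
    congr 1
    field_simp
  have : √(2 * (l : ℝ)) ≠ 0 := by positivity
  rw [poissonProb, hfac, hexp, hsqrt, div_pow]
  field_simp

theorem sub_add_mul_log_div_nonpos {l m : ℝ} (hl : 0 < l) (hm : 0 < m) :
    l - m + l * Real.log (m / l) ≤ 0 := by
  have := mul_le_mul_of_nonneg_left (Real.log_le_sub_one_of_pos (div_pos hm hl)) hl.le
  rw [mul_sub, mul_div_cancel₀ _ hl.ne', mul_one] at this
  linarith

theorem neg_sq_div_le_sub_add_mul_log_div {l m : ℝ} (hl : 0 < l) (hm : 0 < m) :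
    -((m - l) ^ 2 / m) ≤ l - m + l * Real.log (m / l) := by
  have := mul_le_mul_of_nonneg_left (Real.one_sub_inv_le_log_of_pos (div_pos hm hl)) hl.le
  have hid : (l : ℝ) - m + l * (1 - (m / l)⁻¹) = -((m - l) ^ 2 / m) := by
    field_simp
    ring
  linarith

section PoissonLocalLimit

variable {ι : Type*} {f : Filter ι} {V : ι → ℝ}

theorem tendsto_div_of_tendsto_sq_div {g : ι → ℝ} (hV : Tendsto V f atTop)
    (hg : Tendsto (fun i => g i ^ 2 / V i) f (nhds 0)) :
    Tendsto (fun i => g i / V i) f (nhds 0) := by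
  have hsq : Tendsto (fun i => (g i / V i) ^ 2) f (nhds 0) := by
    have := hg.mul hV.inv_tendsto_atTop
    rw [zero_mul] at this
    refine this.congr fun i => ?_
    simp only [Pi.inv_apply]
    ring
  have habs := ((Real.continuous_sqrt.tendsto 0).comp hsq)
  simp only [Function.comp_def, Real.sqrt_sq_eq_abs, Real.sqrt_zero] at habs
  exact (tendsto_zero_iff_abs_tendsto_zero _).2 habs

variable {m : ι → ℝ}

theorem tendsto_div_of_tendsto_sq_sub_div {x : ι → ℝ} (hV : Tendsto V f atTop)
    (hm : Tendsto (fun i => m i / V i) f (nhds 1))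
    (hx : Tendsto (fun i => (m i - x i) ^ 2 / V i) f (nhds 0)) :
    Tendsto (fun i => x i / V i) f (nhds 1) := by
  have := hm.sub (tendsto_div_of_tendsto_sq_div hV hx)
  rw [sub_zero] at this
  exact this.congr fun i => by ring

theorem tendsto_sub_add_mul_log_div {l : ι → ℝ} (hm : Tendsto (fun i => m i / V i) f (nhds 1))
    (hl : Tendsto (fun i => (m i - l i) ^ 2 / V i) f (nhds 0))
    (hpos : ∀ᶠ i in f, 0 < l i ∧ 0 < m i ∧ 0 < V i) :
    Tendsto (fun i => l i - m i + l i * Real.log (m i / l i)) f (nhds 0) := by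
  have hlow : Tendsto (fun i => -(((m i - l i) ^ 2 / V i) / (m i / V i))) f (nhds 0) := by
    simpa using (hl.div hm one_ne_zero).neg
  refine tendsto_of_tendsto_of_tendsto_of_le_of_le' hlow tendsto_const_nhds ?_ ?_
  · filter_upwards [hpos] with i ⟨hli, hmi, hVi⟩
    rw [div_div_div_cancel_right₀ hVi.ne']
    exact neg_sq_div_le_sub_add_mul_log_div hli hmi
  · filter_upwards [hpos] with i hi
    exact sub_add_mul_log_div_nonpos hi.1 hi.2.1

theorem tendsto_sqrt_two_pi_mul_poissonProb {l : ι → ℕ} (hV : Tendsto V f atTop)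
    (hm : Tendsto (fun i => m i / V i) f (nhds 1))
    (hl : Tendsto (fun i => (m i - l i) ^ 2 / V i) f (nhds 0)) :
    Tendsto (fun i => Real.sqrt (2 * Real.pi * V i) * poissonProb (m i) (l i)) f (nhds 1) := by
  have hlV : Tendsto (fun i => (l i : ℝ) / V i) f (nhds 1) :=
    tendsto_div_of_tendsto_sq_sub_div hV hm hl
  have hVpos := hV.eventually_gt_atTop 0
  have hl_top : Tendsto l f atTop := by
    refine tendsto_natCast_atTop_iff.1 ((hlV.pos_mul_atTop one_pos hV).congr' ?_)
    filter_upwards [hVpos] with i hVi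
    exact div_mul_cancel₀ _ hVi.ne'
  have hpos : ∀ᶠ i in f, 0 < (l i : ℝ) ∧ 0 < m i ∧ 0 < V i := by
    filter_upwards [hm.eventually (lt_mem_nhds one_pos), hVpos,
      ((tendsto_natCast_atTop_atTop (R := ℝ)).comp hl_top).eventually_gt_atTop 0]
      with i hmi hVi hli
    exact ⟨hli, (div_pos_iff_of_pos_right hVi).1 hmi, hVi⟩
  have hsqrt : Tendsto (fun i => Real.sqrt (V i / l i)) f (nhds 1) := by
    have hVl := hlV.inv₀ one_ne_zero
    rw [inv_one] at hVl
    have := (Real.continuous_sqrt.tendsto 1).comp hVl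
    simpa only [Real.sqrt_one, Function.comp_def, inv_div] using this
  have hπ : Real.sqrt Real.pi ≠ 0 := (Real.sqrt_pos.2 Real.pi_pos).ne'
  have hstirling : Tendsto (fun i => Real.sqrt Real.pi / Stirling.stirlingSeq (l i)) f
      (nhds 1) := by
    have := (tendsto_const_nhds (x := Real.sqrt Real.pi)).div
      (Stirling.tendsto_stirlingSeq_sqrt_pi.comp hl_top) hπ
    rwa [div_self hπ] at this
  have hexp := (Real.continuous_exp.tendsto 0).comp
    (tendsto_sub_add_mul_log_div hm hl hpos)
  rw [Real.exp_zero] at hexp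
  have hprod := (hsqrt.mul hstirling).mul hexp
  rw [one_mul, one_mul] at hprod
  refine hprod.congr' ?_
  filter_upwards [hpos] with i ⟨hli, hmi, hVi⟩
  exact (sqrt_two_pi_mul_poissonProb_eq hVi.le hmi (by exact_mod_cast hli.ne')).symm

theorem tendsto_sqrt_two_pi_mul_poissonProb_floor {x : ι → ℝ} (hV : Tendsto V f atTop)
    (hm : Tendsto (fun i => m i / V i) f (nhds 1))
    (hx : Tendsto (fun i => (m i - x i) ^ 2 / V i) f (nhds 0)) :
    Tendsto (fun i => Real.sqrt (2 * Real.pi * V i) * poissonProb (m i) ⌊x i⌋₊) f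
      (nhds 1) := by
  refine tendsto_sqrt_two_pi_mul_poissonProb hV hm ?_
  have hxV := tendsto_div_of_tendsto_sq_sub_div hV hm hx
  have hbound : Tendsto (fun i => 2 * ((m i - x i) ^ 2 / V i) + 2 * (V i)⁻¹) f (nhds 0) := by
    simpa using (hx.const_mul 2).add (hV.inv_tendsto_atTop.const_mul 2)
  refine tendsto_of_tendsto_of_tendsto_of_le_of_le' tendsto_const_nhds hbound ?_ ?_
  · filter_upwards [hV.eventually_gt_atTop 0] with i hVi
    positivity
  · filter_upwards [hV.eventually_gt_atTop 0, hxV.eventually (lt_mem_nhds one_pos)]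
      with i hVi hxi
    have hx₀ : 0 ≤ x i := ((div_pos_iff_of_pos_right hVi).1 hxi).le
    have h₁ := Nat.floor_le hx₀
    have h₂ : x i - ⌊x i⌋₊ ≤ 1 := by linarith [Nat.lt_floor_add_one (x i)]
    rw [inv_eq_one_div, mul_div_assoc', mul_div_assoc', ← add_div,
      div_le_div_iff_of_pos_right hVi]
    nlinarith [sq_nonneg (m i - x i - (x i - ⌊x i⌋₊)),
      mul_le_one₀ h₂ (sub_nonneg.2 h₁) h₂]

end PoissonLocalLimit

theorem one_le_log_max_exp_one (x : ℝ) : 1 ≤ Real.log (max x (Real.exp 1)) := by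
  rw [Real.le_log_iff_exp_le (by positivity)]
  exact le_max_right _ _

theorem llog_nonneg (x : ℝ) : 0 ≤ llog x :=
  Real.log_nonneg (one_le_log_max_exp_one x)

theorem llog_mono : Monotone llog := fun _ _ h =>
  Real.log_le_log (one_pos.trans_le (one_le_log_max_exp_one _))
    (Real.log_le_log (by positivity) (max_le_max_right _ h))

theorem le_vk (k : ℕ) : k ≤ vk k := by
  have h₀ : k ^ (2 * k) ≤ (k + 1) ^ (2 * k) := Nat.pow_le_pow_left k.le_succ _
  have h₁ : 1 ≤ (k + 1) ^ (2 * k) := Nat.one_le_pow _ _ k.succ_pos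
  have h₂ : (k + 1) ^ (2 * (k + 1)) = (k + 1) ^ (2 * k) * (k + 1) ^ 2 := by ring
  rw [vk, nk, nk, h₂]
  generalize (k + 1) ^ (2 * k) = x at h₀ h₁
  have : k ^ (2 * k) + k ≤ x * (k + 1) ^ 2 := by nlinarith [Nat.mul_le_mul_right k h₁]
  omega

theorem tendsto_vk : Tendsto vk atTop atTop :=
  tendsto_atTop_mono le_vk tendsto_id

theorem tendsto_nk_succ : Tendsto (fun k => nk (k + 1)) atTop atTop :=
  tendsto_atTop_mono (fun _ => Nat.sub_le _ _) tendsto_vk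

theorem sq_mul_uk_div_vk_le {a : ℕ → ℝ} (k : ℕ) (ha : 0 < a (nk (k + 1))) :
    ((vk k : ℝ) * a (nk (k + 1)) * uk a k) ^ 2 / vk k
      ≤ 4 * (a (nk (k + 1)) * llog (nk (k + 1))) := by
  set N : ℝ := ((nk (k + 1) : ℕ) : ℝ)
  have hVN : (vk k : ℝ) ≤ N := Nat.cast_le.2 (Nat.sub_le _ _)
  have hu : uk a k ^ 2 = 4 * llog (vk k) / (N * a (nk (k + 1))) :=
    Real.sq_sqrt (div_nonneg (by linarith [llog_nonneg (vk k)]) (by positivity))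
  have hbound_nonneg : 0 ≤ 4 * (a (nk (k + 1)) * llog N) :=
    mul_nonneg zero_le_four (mul_nonneg ha.le (llog_nonneg N))
  rcases (Nat.cast_nonneg (vk k) : (0 : ℝ) ≤ vk k).eq_or_lt with hV | hV
  · rw [← hV, zero_mul, zero_mul, zero_pow two_ne_zero, zero_div]
    exact hbound_nonneg
  have hN : 0 < N := hV.trans_le hVN
  calc ((vk k : ℝ) * a (nk (k + 1)) * uk a k) ^ 2 / vk k
      = 4 * (a (nk (k + 1)) * llog (vk k)) * (vk k / N) := by
        rw [mul_pow, mul_pow, hu]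
        field_simp
    _ ≤ 4 * (a (nk (k + 1)) * llog N) * 1 := by
        gcongr
        · exact llog_mono hVN
        · exact (div_le_one hN).2 hVN
    _ = 4 * (a (nk (k + 1)) * llog N) := mul_one _

theorem statement_general (a : ℕ → ℝ) (ha_pos : ∀ n, 0 < a n)
    (ha_lim : Tendsto a atTop (nhds 0))
    (halog : Tendsto (fun n : ℕ => a n * llog n) atTop (nhds 0)) :
    Tendsto (fun k : ℕ => Real.sqrt (2 * Real.pi * (vk k : ℝ)) *
      poissonProb ((vk k : ℝ) * (1 - a (nk (k + 1))))
        ⌊(vk k : ℝ) * (1 - a (nk (k + 1))) - (vk k : ℝ) * a (nk (k + 1)) * uk a k⌋₊)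
      atTop (nhds 1) := by
  have hV : Tendsto (fun k => (vk k : ℝ)) atTop atTop :=
    tendsto_natCast_atTop_atTop.comp tendsto_vk
  refine tendsto_sqrt_two_pi_mul_poissonProb_floor hV ?_ ?_
  · have := (tendsto_const_nhds (x := (1 : ℝ))).sub (ha_lim.comp tendsto_nk_succ)
    rw [sub_zero] at this
    refine this.congr' ?_
    filter_upwards [hV.eventually_gt_atTop 0] with k hk
    exact (mul_div_cancel_left₀ _ hk.ne').symm
  · have hbound := (halog.comp tendsto_nk_succ).const_mul 4
    rw [mul_zero] at hbound
    refine squeeze_zero (fun k => by positivity) (fun k => ?_) hbound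
    rw [sub_sub_cancel]
    exact sq_mul_uk_div_vk_le k (ha_pos _)

theorem statement (a : ℕ → ℝ) (ha_pos : ∀ n, 0 < a n)
    (hna_mono : Monotone (fun n : ℕ => (n : ℝ) * a n))
    (hna_top : Tendsto (fun n : ℕ => (n : ℝ) * a n) atTop atTop)
    (ha_anti : Antitone a) (ha_lim : Tendsto a atTop (nhds 0))
    (halog : Tendsto (fun n : ℕ => a n * llog n) atTop (nhds 0))
    (h73 : Tendsto (fun n : ℕ => (n : ℝ) * a n / llog n ^ ((7:ℝ)/3)) atTop atTop) :
    Tendsto (fun k : ℕ => Real.sqrt (2 * Real.pi * (vk k : ℝ)) *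
      poissonProb ((vk k : ℝ) * (1 - a (nk (k + 1))))
        ⌊(vk k : ℝ) * (1 - a (nk (k + 1))) - (vk k : ℝ) * a (nk (k + 1)) * uk a k⌋₊)
      atTop (nhds 1) :=
  statement_general a ha_pos ha_lim halog
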